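/- Let K/F be cyclic Galois of degree n with Gal(K/F)=⟨σ⟩, R = K[t;σ], and let f ∈ R have degree m with gcrd(f,t)=1. If the minimal central left multiple h(t) = ĥ(t^n) of f satisfies deg_x ĥ = m, then N(f) = a·ĥ(t^n) for some a ∈ K^×; consequently f is irreducible in R if and only if N(f) is irreducible in F[x]. -/

import Mathlib

/-!
The reduced norm `N g = det ρ(g)` is multiplicative, has degree at most `deg g`, becomes a left
multiple of `g` after substituting `x = t ^ n` (use the adjugate of `ρ g`), and is fixed by `σ`
(compare the two factorisations `ρ (t g) = ρ t · ρ g = σ(ρ g) · ρ t`), so it descends to `F[x]`.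
The `p ∈ F[x]` with `p(t ^ n) ∈ R f` form an ideal, which minimality makes `(ĥ)`; it contains
`N f`, of degree `≤ m = deg ĥ`, hence `N f = a ĥ`. Division with remainder makes `R` a left
principal ideal ring, so for irreducible `f` the ideal `(ĥ)` is prime, `p(t ^ n)` being central.
Conversely, if `f = a b` with non-units `a, b`, then `N f = N a · N b` where `deg N a ≤ deg a` and
`deg N b ≤ deg b` add up to `m = deg a + deg b`, so neither factor of `N f` is a constant.
-/

open Polynomial

theorem RingHom.iterate_map_ne_zero {K : Type*} [DivisionRing K] (σ : K →+* K) {a : K} (ha : a ≠ 0)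
    (i : ℕ) : σ^[i] a ≠ 0 := fun h => ha (σ.injective.iterate i (by rw [h, iterate_map_zero]))

theorem exists_mul_add_mul_eq_one_of_irreducible {R : Type*} [Ring R] [IsPrincipalIdealRing R]
    {f c : R} (hf : Irreducible f) (hc : c ∉ Ideal.span {f}) : ∃ u v, u * c + v * f = 1 := by
  obtain ⟨y, hy⟩ := (IsPrincipalIdealRing.principal (Ideal.span {c, f})).principal
  have mem_span_y : ∀ z ∈ ({c, f} : Set R), z ∈ Ideal.span {y} := fun z hz => by
    rw [Ideal.span, ← hy]
    exact Ideal.subset_span hz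
  obtain ⟨q, rfl⟩ := Ideal.mem_span_singleton'.1 (mem_span_y f (by simp))
  rcases hf.isUnit_or_isUnit rfl with ⟨u, rfl⟩ | ⟨u, rfl⟩
  · obtain ⟨a, rfl⟩ := Ideal.mem_span_singleton'.1 (mem_span_y c (by simp))
    exact absurd (Ideal.mem_span_singleton'.2 ⟨a * ↑u⁻¹, by simp [mul_assoc]⟩) hc
  · have h1 : (1 : R) ∈ Ideal.span {c, q * u} := by
      rw [hy]
      exact Ideal.mem_span_singleton'.2 ⟨↑u⁻¹, u.inv_mul⟩
    exact Ideal.mem_span_pair.1 h1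

theorem Ideal.isPrime_comap_span_singleton_of_irreducible {A R : Type*} [CommRing A] [Ring R]
    [IsPrincipalIdealRing R] [IsDedekindFiniteMonoid R] (E : A →+* R)
    (hE : ∀ a x, Commute (E a) x) {f : R} (hf : Irreducible f) :
    ((Ideal.span {f}).comap E).IsPrime := by
  refine ⟨?_, fun {a b} hab => or_iff_not_imp_left.2 fun ha => ?_⟩
  · rw [Ne, Ideal.eq_top_iff_one, Ideal.mem_comap, map_one, Ideal.mem_span_singleton']
    rintro ⟨a, ha⟩
    exact hf.not_isUnit (IsUnit.of_mul_eq_one_right a ha)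
  rw [Ideal.mem_comap] at hab ha ⊢
  obtain ⟨u, v, huv⟩ := exists_mul_add_mul_eq_one_of_irreducible hf ha
  obtain ⟨w, hw⟩ := Ideal.mem_span_singleton'.1 hab
  refine Ideal.mem_span_singleton'.2 ⟨u * w + v * E b, ?_⟩
  calc (u * w + v * E b) * f = u * (w * f) + v * (E b * f) := by noncomm_ring
    _ = (u * E a + v * f) * E b := by rw [hw, map_mul, (hE b f).eq]; noncomm_ring
    _ = E b := by rw [huv, one_mul]

theorem Ideal.eq_span_singleton_of_monic_of_natDegree_le {A : Type*} [CommRing A]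
    {J : Ideal A[X]} {q : A[X]} (hq : q.Monic) (hqJ : q ∈ J)
    (hmin : ∀ p ∈ J, p ≠ 0 → q.natDegree ≤ p.natDegree) : J = Ideal.span {q} := by
  nontriviality A
  refine le_antisymm (fun p hp => Ideal.mem_span_singleton.2 ?_)
    ((Ideal.span_singleton_le_iff_mem J).2 hqJ)
  rw [← modByMonic_eq_zero_iff_dvd hq]
  by_contra hr
  have hrJ : p %ₘ q ∈ J := by
    rw [modByMonic_eq_sub_mul_div]
    exact J.sub_mem hp (J.mul_mem_right _ hqJ)
  exact (hmin _ hrJ hr).not_gt (natDegree_lt_natDegree hr (degree_modByMonic_lt p hq))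

section Galois

variable {F K : Type*} [Field F] [Field K] [Algebra F K] [FiniteDimensional F K] [IsGalois F K]

theorem AlgEquiv.iterate_finrank_eq_id (σ : K ≃ₐ[F] K) : (⇑σ)^[Module.finrank F K] = id := by
  rw [← AlgEquiv.coe_pow, ← IsGalois.card_aut_eq_finrank, pow_card_eq_one']
  rfl

theorem Polynomial.mem_lifts_of_map_eq_self {σ : K ≃ₐ[F] K} (hσ : ∀ τ, τ ∈ Subgroup.zpowers σ)
    {p : K[X]} (hp : p.map (σ : K →+* K) = p) : p ∈ lifts (algebraMap F K) := by
  refine (lifts_iff_coeff_lifts p).2 fun k => ?_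
  have hfix : σ ∈ MulAction.stabilizer (K ≃ₐ[F] K) (p.coeff k) := by
    simpa using congrArg (coeff · k) hp
  rw [← IntermediateField.mem_bot, ← IsGalois.fixedField_top, IntermediateField.mem_fixedField_iff]
  exact fun τ _ => Subgroup.zpowers_le.2 hfix (hσ τ)

end Galois

/-- `R` is the skew polynomial ring `K[t;σ]`: each `x` is uniquely `∑ ι (coeff x i) * t ^ i`. -/
structure IsSkewPolynomialRing {K R : Type*} [Field K] [Ring R] (σ : K →+* K) (ι : K →+* R)
    (t : R) (coeff : R →+ (ℕ →₀ K)) : Prop where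
  t_mul : ∀ a, t * ι a = ι (σ a) * t
  coeff_ι_mul_pow : ∀ a i, coeff (ι a * t ^ i) = Finsupp.single i a
  sum_coeff : ∀ x, (coeff x).sum (fun i a => ι a * t ^ i) = x

/-- The `t`-degree; it is `0` at `0`. -/
def skewNatDegree {K R : Type*} [Zero K] (coeff : R → ℕ →₀ K) (x : R) : ℕ :=
  (coeff x).support.sup id

section Degree

variable {K R : Type*} [Zero K] {coeff : R → ℕ →₀ K} {x : R} {k : ℕ}

theorem coeff_eq_zero_of_skewNatDegree_lt (h : skewNatDegree coeff x < k) : coeff x k = 0 :=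
  Finsupp.notMem_support_iff.1 fun hk => h.not_ge (Finset.le_sup (f := id) hk)

theorem le_skewNatDegree_of_coeff_ne_zero (h : coeff x k ≠ 0) : k ≤ skewNatDegree coeff x :=
  Finset.le_sup (f := id) (Finsupp.mem_support_iff.2 h)

theorem skewNatDegree_le_of_forall_lt {b : ℕ} (h : ∀ k, b < k → coeff x k = 0) :
    skewNatDegree coeff x ≤ b :=
  Finset.sup_le fun k hk => not_lt.1 fun hbk => Finsupp.mem_support_iff.1 hk (h k hbk)

end Degree

namespace IsSkewPolynomialRing

variable {K R : Type*} [Field K] [Ring R] {σ : K →+* K} {ι : K →+* R} {t : R}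
  {coeff : R →+ (ℕ →₀ K)} (hR : IsSkewPolynomialRing σ ι t coeff)
include hR

local notation "deg" => skewNatDegree coeff

theorem pow_mul_ι (i : ℕ) (a : K) : t ^ i * ι a = ι (σ^[i] a) * t ^ i := by
  induction i generalizing a with
  | zero => simp
  | succ i ih =>
    rw [pow_succ, mul_assoc, hR.t_mul, ← mul_assoc, ih, Function.iterate_succ_apply, mul_assoc,
      ← pow_succ]

theorem coeff_injective : Function.Injective coeff := fun x y h => by
  rw [← hR.sum_coeff x, ← hR.sum_coeff y, h]

theorem coeff_skewNatDegree_ne_zero {x : R} (hx : x ≠ 0) : coeff x (deg x) ≠ 0 := by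
  have hx' : coeff x ≠ 0 := fun h => hx (hR.coeff_injective (by rw [h, map_zero]))
  obtain ⟨k, hk, hsup⟩ := Finset.exists_mem_eq_sup _ (Finsupp.support_nonempty_iff.2 hx') id
  rw [skewNatDegree, hsup]
  exact Finsupp.mem_support_iff.1 hk

theorem skewNatDegree_ι_mul_pow {c : K} (hc : c ≠ 0) (j : ℕ) : deg (ι c * t ^ j) = j := by
  rw [skewNatDegree, hR.coeff_ι_mul_pow, Finsupp.support_single _ hc, Finset.sup_singleton,
    id]

theorem coeff_mul (x y : R) : coeff (x * y) =
    (coeff x).sum fun i a => (coeff y).sum fun j b => Finsupp.single (i + j) (a * σ^[i] b) := by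
  conv_lhs => rw [← hR.sum_coeff x, ← hR.sum_coeff y]
  rw [Finsupp.sum_mul, map_finsuppSum]
  refine Finsupp.sum_congr fun i _ => ?_
  rw [Finsupp.mul_sum, map_finsuppSum]
  refine Finsupp.sum_congr fun j _ => ?_
  rw [mul_assoc, ← mul_assoc (t ^ i), hR.pow_mul_ι, mul_assoc, ← pow_add, ← mul_assoc, ← map_mul,
    hR.coeff_ι_mul_pow]

theorem coeff_ι_mul_pow_mul (c : K) (j : ℕ) (y : R) (k : ℕ) :
    coeff (ι c * t ^ j * y) (j + k) = c * σ^[j] (coeff y k) := by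
  rw [hR.coeff_mul, hR.coeff_ι_mul_pow, Finsupp.sum_single_index (by simp)]
  simp only [Finsupp.sum_apply, Finsupp.single_apply, Nat.add_left_cancel_iff]
  rw [Finsupp.sum_ite_eq']
  split_ifs with hk
  · rfl
  · rw [Finsupp.notMem_support_iff.1 hk, iterate_map_zero, mul_zero]

theorem coeff_mul_of_lt {x y : R} {k : ℕ} (h : deg x + deg y < k) : coeff (x * y) k = 0 := by
  rw [hR.coeff_mul, Finsupp.sum_apply]
  refine Finset.sum_eq_zero fun i hi => ?_
  simp only [Finsupp.sum_apply]
  refine Finset.sum_eq_zero fun j hj => Finsupp.single_eq_of_ne ?_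
  have hi := le_skewNatDegree_of_coeff_ne_zero (Finsupp.mem_support_iff.1 hi)
  have hj := le_skewNatDegree_of_coeff_ne_zero (Finsupp.mem_support_iff.1 hj)
  omega

theorem coeff_mul_skewNatDegree_add (x y : R) :
    coeff (x * y) (deg x + deg y) = coeff x (deg x) * σ^[deg x] (coeff y (deg y)) := by
  rw [hR.coeff_mul, Finsupp.sum_apply, Finsupp.sum_eq_single (deg x)]
  · rw [Finsupp.sum_apply, Finsupp.sum_eq_single (deg y)]
    · simp
    · intro j hj hne
      have := le_skewNatDegree_of_coeff_ne_zero hj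
      exact Finsupp.single_eq_of_ne (by omega)
    · simp
  · intro i hi hne
    have := le_skewNatDegree_of_coeff_ne_zero hi
    simp only [Finsupp.sum_apply]
    refine Finset.sum_eq_zero fun j hj => Finsupp.single_eq_of_ne ?_
    have := le_skewNatDegree_of_coeff_ne_zero (Finsupp.mem_support_iff.1 hj)
    omega
  · simp

theorem coeff_mul_skewNatDegree_add_ne_zero {x y : R} (hx : x ≠ 0) (hy : y ≠ 0) :
    coeff (x * y) (deg x + deg y) ≠ 0 := by
  rw [hR.coeff_mul_skewNatDegree_add]
  exact mul_ne_zero (hR.coeff_skewNatDegree_ne_zero hx)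
    (σ.iterate_map_ne_zero (hR.coeff_skewNatDegree_ne_zero hy) _)

theorem skewNatDegree_mul {x y : R} (hx : x ≠ 0) (hy : y ≠ 0) :
    deg (x * y) = deg x + deg y :=
  le_antisymm (skewNatDegree_le_of_forall_lt fun _ => hR.coeff_mul_of_lt)
    (le_skewNatDegree_of_coeff_ne_zero (hR.coeff_mul_skewNatDegree_add_ne_zero hx hy))

theorem isDomain : IsDomain R := by
  have : Nontrivial R := ⟨⟨1, 0, fun h => by
    have h1 := hR.coeff_ι_mul_pow 1 0
    rw [map_one, pow_zero, mul_one, h, map_zero] at h1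
    exact one_ne_zero (Finsupp.single_eq_zero.1 h1.symm)⟩⟩
  have : NoZeroDivisors R := ⟨fun {x y} hxy => by
    by_contra! h
    apply hR.coeff_mul_skewNatDegree_add_ne_zero h.1 h.2
    rw [hxy, map_zero, Finsupp.coe_zero, Pi.zero_apply]⟩
  exact NoZeroDivisors.to_isDomain R

theorem isUnit_iff_skewNatDegree_eq_zero {x : R} (hx : x ≠ 0) : IsUnit x ↔ deg x = 0 := by
  have := hR.isDomain
  constructor
  · rintro ⟨u, rfl⟩
    have hdeg := hR.skewNatDegree_mul u.ne_zero u⁻¹.ne_zero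
    have hdeg1 : deg (1 : R) = 0 := by simpa using hR.skewNatDegree_ι_mul_pow one_ne_zero 0
    rw [u.mul_inv, hdeg1] at hdeg
    omega
  · intro h
    have hx0 : x = ι (coeff x 0) * t ^ 0 := hR.coeff_injective <| by
      rw [hR.coeff_ι_mul_pow]
      ext (_ | k)
      · simp
      · simp [coeff_eq_zero_of_skewNatDegree_lt (h ▸ k.succ_pos)]
    rw [hx0, pow_zero, mul_one]
    exact (Ne.isUnit (h ▸ hR.coeff_skewNatDegree_ne_zero hx)).map ι

theorem exists_eq_mul_add {g : R} (hg : g ≠ 0) (x : R) :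
    ∃ q r, x = q * g + r ∧ ∀ k, deg g ≤ k → coeff r k = 0 := by
  suffices ∀ d x, (∀ k, d ≤ k → coeff x k = 0) →
      ∃ q r, x = q * g + r ∧ ∀ k, deg g ≤ k → coeff r k = 0 from
    this _ x fun _ hk => coeff_eq_zero_of_skewNatDegree_lt hk
  intro d
  induction d with
  | zero => exact fun x hx => ⟨0, x, by simp, fun k _ => hx k k.zero_le⟩
  | succ d ih =>
    intro x hx
    by_cases hd : d + 1 ≤ deg g
    · exact ⟨0, x, by simp, fun k hk => hx k (hd.trans hk)⟩
    obtain ⟨j, rfl⟩ : ∃ j, d = j + deg g := ⟨d - deg g, by omega⟩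
    have hlc := σ.iterate_map_ne_zero (hR.coeff_skewNatDegree_ne_zero hg) j
    set c := coeff x (j + deg g) * (σ^[j] (coeff g (deg g)))⁻¹
    obtain ⟨q, r, hxr, hr⟩ := ih (x - ι c * t ^ j * g) fun k hk => by
      obtain ⟨l, rfl⟩ : ∃ l, k = j + l := ⟨k - j, by omega⟩
      rw [map_sub, Finsupp.sub_apply, hR.coeff_ι_mul_pow_mul, sub_eq_zero]
      rcases (show deg g ≤ l by omega).eq_or_lt with rfl | hl
      · rw [mul_assoc, inv_mul_cancel₀ hlc, mul_one]
      · rw [hx _ (by omega), coeff_eq_zero_of_skewNatDegree_lt hl, iterate_map_zero, mul_zero]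
    exact ⟨q + ι c * t ^ j, r, by rw [add_mul, add_right_comm, ← hxr, sub_add_cancel], hr⟩

theorem isPrincipalIdealRing : IsPrincipalIdealRing R := by
  classical
  refine ⟨fun S => ?_⟩
  by_cases hS : S = ⊥
  · exact hS ▸ bot_isPrincipal
  have hex : ∃ d, ∃ y ∈ S, y ≠ 0 ∧ deg y = d := by
    obtain ⟨y, hy, hy0⟩ := Submodule.exists_mem_ne_zero_of_ne_bot hS
    exact ⟨_, y, hy, hy0, rfl⟩
  obtain ⟨y, hyS, hy0, hyd⟩ := Nat.find_spec hex
  refine ⟨y, le_antisymm (fun x hx => ?_) ((Ideal.span_singleton_le_iff_mem S).2 hyS)⟩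
  obtain ⟨q, r, rfl, hr⟩ := hR.exists_eq_mul_add hy0 x
  obtain rfl : r = 0 := by
    by_contra hr0
    have hrS : r ∈ S := by simpa using S.sub_mem hx (S.mul_mem_left q hyS)
    have hmin := hyd ▸ Nat.find_min' hex ⟨r, hrS, hr0, rfl⟩
    exact hR.coeff_skewNatDegree_ne_zero hr0 (hr _ hmin)
  exact Ideal.mem_span_singleton'.2 ⟨q, (add_zero _).symm⟩

theorem commute_of_commute_ι_of_commute_t {z : R} (hι : ∀ a, Commute z (ι a)) (ht : Commute z t)
    (x : R) : Commute z x := by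
  rw [← hR.sum_coeff x]
  exact Commute.sum_right _ _ _ fun i _ => (hι _).mul_right (ht.pow_right i)

section Eval

variable {n : ℕ} (hσn : σ^[n] = id)
include hσn

theorem commute_ι_pow (a : K) : Commute (ι a) (t ^ n) :=
  (by rw [hR.pow_mul_ι, hσn, id] : t ^ n * ι a = ι a * t ^ n).symm

noncomputable def evalPow : K[X] →+* R := eval₂RingHom' ι (t ^ n) (hR.commute_ι_pow hσn)

theorem evalPow_apply (p : K[X]) : hR.evalPow hσn p = eval₂ ι (t ^ n) p := rfl

theorem evalPow_eq_sum (p : K[X]) : hR.evalPow hσn p = p.sum fun k a => ι a * t ^ (n * k) := by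
  simp [evalPow_apply, eval₂_eq_sum, pow_mul]

theorem coeff_evalPow_mul_pow (p : K[X]) (j : ℕ) :
    coeff (hR.evalPow hσn p * t ^ j) = p.sum fun k a => Finsupp.single (n * k + j) a := by
  rw [evalPow_eq_sum, Polynomial.sum, Finset.sum_mul, map_sum, Polynomial.sum]
  refine Finset.sum_congr rfl fun k _ => ?_
  rw [mul_assoc, ← pow_add, hR.coeff_ι_mul_pow]

theorem coeff_evalPow_mul_pow_apply (p : K[X]) {j j₀ : ℕ} (hj : j < n) (hj₀ : j₀ < n) (k : ℕ) :
    coeff (hR.evalPow hσn p * t ^ j) (n * k + j₀) = if j = j₀ then p.coeff k else 0 := by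
  have key : ∀ k', n * k' + j = n * k + j₀ ↔ k' = k ∧ j = j₀ := fun k' => by
    refine ⟨fun h => ?_, by rintro ⟨rfl, rfl⟩; rfl⟩
    have hdiv : (n * k' + j) / n = (n * k + j₀) / n := by rw [h]
    rw [Nat.mul_add_div (by omega), Nat.mul_add_div (by omega), Nat.div_eq_of_lt hj,
      Nat.div_eq_of_lt hj₀] at hdiv
    subst hdiv
    exact ⟨rfl, by simpa using h⟩
  rw [hR.coeff_evalPow_mul_pow, Polynomial.sum, Finsupp.finsetSum_apply]
  simp only [Finsupp.single_apply, key]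
  by_cases h : j = j₀
  · simp only [h, and_true, Finset.sum_ite_eq']
    exact ite_eq_left_iff.2 fun hk => (notMem_support_iff.1 hk).symm
  · simp [h]

theorem coeff_sum_evalPow_mul_pow (v : Fin n → K[X]) (k : ℕ) (j₀ : Fin n) :
    coeff (∑ j : Fin n, hR.evalPow hσn (v j) * t ^ (j : ℕ)) (n * k + j₀) = (v j₀).coeff k := by
  rw [map_sum, Finsupp.finsetSum_apply, Finset.sum_eq_single j₀]
  · rw [hR.coeff_evalPow_mul_pow_apply hσn _ j₀.isLt j₀.isLt, if_pos rfl]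
  · intro j _ hj
    rw [hR.coeff_evalPow_mul_pow_apply hσn _ j.isLt j₀.isLt, if_neg (Fin.val_ne_of_ne hj)]
  · simp

theorem sum_evalPow_mul_pow_injective :
    Function.Injective fun v : Fin n → K[X] => ∑ j : Fin n, hR.evalPow hσn (v j) * t ^ (j : ℕ) :=
  fun v w h => funext fun j => Polynomial.ext fun k => by
    rw [← hR.coeff_sum_evalPow_mul_pow hσn, ← hR.coeff_sum_evalPow_mul_pow hσn]
    exact congrArg (coeff · (n * k + j)) h

theorem coeff_evalPow (hn : 0 < n) (p : K[X]) (l : ℕ) :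
    coeff (hR.evalPow hσn p) l = if l % n = 0 then p.coeff (l / n) else 0 := by
  conv_lhs => rw [← Nat.div_add_mod l n, ← mul_one (hR.evalPow hσn p), ← pow_zero t]
  rw [hR.coeff_evalPow_mul_pow_apply hσn p hn (Nat.mod_lt l hn)]
  exact if_congr eq_comm rfl rfl

theorem coeff_evalPow_mul (hn : 0 < n) (p : K[X]) (k : ℕ) :
    coeff (hR.evalPow hσn p) (n * k) = p.coeff k := by
  rw [hR.coeff_evalPow hσn hn, Nat.mul_mod_right, if_pos rfl, Nat.mul_div_cancel_left _ hn]

theorem evalPow_injective (hn : 0 < n) : Function.Injective (hR.evalPow hσn) :=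
  (injective_iff_map_eq_zero _).2 fun p hp => Polynomial.ext fun k => by
    rw [← hR.coeff_evalPow_mul hσn hn, hp, map_zero, Finsupp.coe_zero, Pi.zero_apply, coeff_zero]

theorem skewNatDegree_evalPow (hn : 0 < n) {p : K[X]} (hp : p ≠ 0) :
    deg (hR.evalPow hσn p) = n * p.natDegree := by
  refine le_antisymm (skewNatDegree_le_of_forall_lt fun l hl => ?_)
    (le_skewNatDegree_of_coeff_ne_zero ?_)
  · rw [hR.coeff_evalPow hσn hn]
    split_ifs with h
    · refine coeff_eq_zero_of_natDegree_lt ?_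
      have := Nat.div_add_mod l n
      by_contra! hle
      have := Nat.mul_le_mul_left n hle
      omega
    · rfl
  · rw [hR.coeff_evalPow_mul hσn hn]
    exact leadingCoeff_ne_zero.2 hp

theorem t_mul_evalPow (p : K[X]) : t * hR.evalPow hσn p = hR.evalPow hσn (p.map σ) * t := by
  induction p using Polynomial.induction_on' with
  | add p q hp hq => rw [map_add, mul_add, hp, hq, Polynomial.map_add, map_add, add_mul]
  | monomial k a =>
    simp only [evalPow_apply, eval₂_monomial, map_monomial, ← mul_assoc, hR.t_mul]
    rw [mul_assoc, mul_assoc, ((Commute.refl t).pow_right n).pow_right k]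

theorem commute_evalPow_of_map_eq {p : K[X]} (hp : p.map σ = p) (x : R) :
    Commute (hR.evalPow hσn p) x := by
  refine hR.commute_of_commute_ι_of_commute_t (fun a => ?_) ?_ x
  · simpa [evalPow_apply] using (Commute.all p (C a)).map (hR.evalPow hσn)
  · exact (by rw [hR.t_mul_evalPow hσn, hp] : t * hR.evalPow hσn p = _).symm

theorem t_mul_sum_evalPow_mul_pow (v : Fin n → K[X]) :
    t * ∑ j : Fin n, hR.evalPow hσn (v j) * t ^ (j : ℕ) =
      (∑ j : Fin n, hR.evalPow hσn ((v j).map σ) * t ^ (j : ℕ)) * t := by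
  simp only [Finset.mul_sum, Finset.sum_mul, ← mul_assoc, hR.t_mul_evalPow hσn]
  simp only [mul_assoc, pow_mul_comm']

end Eval

theorem t_ne_zero : t ≠ 0 := fun h => by
  have h1 := hR.coeff_ι_mul_pow 1 1
  rw [map_one, one_mul, pow_one, h, map_zero] at h1
  exact one_ne_zero (Finsupp.single_eq_zero.1 h1.symm)

theorem skewNatDegree_pow_t (i : ℕ) : deg (t ^ i) = i := by
  simpa using hR.skewNatDegree_ι_mul_pow one_ne_zero i

section Matrix

variable {n : ℕ} (hσn : σ^[n] = id) {ρ : R → Matrix (Fin n) (Fin n) K[X]}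
  (hρ : ∀ g (i : Fin n), t ^ (i : ℕ) * g = ∑ j : Fin n, hR.evalPow hσn (ρ g i j) * t ^ (j : ℕ))
include hσn hρ

theorem sum_evalPow_mul_pow_mul (v : Fin n → K[X]) (g : R) :
    (∑ i : Fin n, hR.evalPow hσn (v i) * t ^ (i : ℕ)) * g =
      ∑ j : Fin n, hR.evalPow hσn (Matrix.vecMul v (ρ g) j) * t ^ (j : ℕ) := by
  rw [Finset.sum_mul]
  simp_rw [mul_assoc, hρ, Finset.mul_sum, ← mul_assoc, ← map_mul]
  rw [Finset.sum_comm]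
  simp only [Matrix.vecMul, dotProduct, map_sum, Finset.sum_mul]

theorem ρ_mul (a b : R) : ρ (a * b) = ρ a * ρ b := by
  funext i
  apply hR.sum_evalPow_mul_pow_injective hσn
  simp only
  rw [← hρ, ← mul_assoc, hρ, hR.sum_evalPow_mul_pow_mul hσn hρ]
  rfl

theorem ρ_t_mul (g : R) : ρ (t * g) = (ρ g).map (map σ) * ρ t := by
  funext i
  apply hR.sum_evalPow_mul_pow_injective hσn
  simp only
  rw [← hρ, ← mul_assoc, ← pow_succ, pow_succ', mul_assoc, hρ, hR.t_mul_sum_evalPow_mul_pow hσn,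
    hR.sum_evalPow_mul_pow_mul hσn hρ]
  rfl

theorem det_ρ_ne_zero {g : R} (hg : g ≠ 0) : (ρ g).det ≠ 0 := by
  classical
  have := hR.isDomain
  intro h
  obtain ⟨v, hv, hvg⟩ := Matrix.exists_vecMul_eq_zero_iff.2 h
  have hu : ∑ i : Fin n, hR.evalPow hσn (v i) * t ^ (i : ℕ) ≠ 0 := fun h0 =>
    hv (hR.sum_evalPow_mul_pow_injective hσn (h0.trans (by simp)))
  apply mul_ne_zero hu hg
  rw [hR.sum_evalPow_mul_pow_mul hσn hρ, hvg]
  simp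

theorem map_det_ρ (g : R) : (ρ g).det.map σ = (ρ g).det := by
  have hdet := congrArg Matrix.det ((hR.ρ_mul hσn hρ t g).symm.trans (hR.ρ_t_mul hσn hρ g))
  have hmap : ((ρ g).map (map σ)).det = (ρ g).det.map σ :=
    (RingHom.map_det (mapRingHom σ) (ρ g)).symm
  rw [Matrix.det_mul, Matrix.det_mul, hmap, mul_comm] at hdet
  exact (mul_right_cancel₀ (hR.det_ρ_ne_zero hσn hρ hR.t_ne_zero) hdet).symm

theorem evalPow_det_ρ_mem_span [NeZero n] (g : R) :
    hR.evalPow hσn (ρ g).det ∈ Ideal.span {g} := by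
  refine Ideal.mem_span_singleton'.2
    ⟨∑ i : Fin n, hR.evalPow hσn ((ρ g).adjugate 0 i) * t ^ (i : ℕ), ?_⟩
  have hrow : Matrix.vecMul ((ρ g).adjugate 0) (ρ g) = Pi.single 0 (ρ g).det := by
    funext j
    change ((ρ g).adjugate * ρ g) 0 j = _
    rw [Matrix.adjugate_mul]
    simp [Matrix.one_apply, Pi.single_apply, eq_comm]
  rw [hR.sum_evalPow_mul_pow_mul hσn hρ, hrow, Fintype.sum_eq_single 0 fun j hj => by simp [hj]]
  simp

theorem natDegree_ρ_apply_le {g : R} (hg : g ≠ 0) {i j : Fin n} (hij : ρ g i j ≠ 0) :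
    n * (ρ g i j).natDegree + j ≤ i + deg g := by
  have := hR.isDomain
  have hlc := leadingCoeff_ne_zero.2 hij
  rw [leadingCoeff, ← hR.coeff_sum_evalPow_mul_pow hσn, ← hρ] at hlc
  have := le_skewNatDegree_of_coeff_ne_zero hlc
  rwa [hR.skewNatDegree_mul (pow_ne_zero _ hR.t_ne_zero) hg, hR.skewNatDegree_pow_t] at this

theorem natDegree_det_ρ_le [NeZero n] {g : R} (hg : g ≠ 0) : (ρ g).det.natDegree ≤ deg g := by
  rw [Matrix.det_apply']
  refine natDegree_sum_le_of_forall_le _ _ fun π _ => natDegree_mul_le.trans ?_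
  rw [natDegree_intCast, zero_add]
  by_cases hzero : ∃ i, ρ g (π i) i = 0
  · obtain ⟨i, hi⟩ := hzero
    rw [Finset.prod_eq_zero (f := fun i => ρ g (π i) i) (Finset.mem_univ i) hi, natDegree_zero]
    exact Nat.zero_le _
  refine (natDegree_prod_le _ _).trans (Nat.le_of_mul_le_mul_left ?_ (Nat.pos_of_neZero n))
  have hsum := Finset.sum_le_sum fun i (_ : i ∈ Finset.univ) =>
    hR.natDegree_ρ_apply_le hσn hρ hg fun h => hzero ⟨i, h⟩
  -- the column indices and the permuted row indices have the same sum
  rw [Finset.sum_add_distrib, Finset.sum_add_distrib, ← Finset.mul_sum, Finset.sum_const,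
    Equiv.sum_comp π (fun i : Fin n => (i : ℕ))] at hsum
  simp only [Finset.card_univ, Fintype.card_fin, smul_eq_mul] at hsum
  omega

end Matrix

theorem irreducible_of_irreducible_of_natDegree_eq {A : Type*} [Field A] (ν : R → A[X])
    (hν_mul : ∀ a b, ν (a * b) = ν a * ν b) (hν_le : ∀ g, g ≠ 0 → (ν g).natDegree ≤ deg g)
    {f : R} (hf : f ≠ 0) (hdeg : (ν f).natDegree = deg f) (hirr : Irreducible (ν f)) :
    Irreducible f := by
  have := hR.isDomain
  refine ⟨fun hu => ?_, fun a b hab => ?_⟩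
  · exact hirr.natDegree_pos.ne' (hdeg.trans ((hR.isUnit_iff_skewNatDegree_eq_zero hf).1 hu))
  subst hab
  have ha : a ≠ 0 := left_ne_zero_of_mul hf
  have hb : b ≠ 0 := right_ne_zero_of_mul hf
  have hsplit := hR.skewNatDegree_mul ha hb
  have hνa := hν_le a ha
  have hνb := hν_le b hb
  rw [hν_mul] at hdeg hirr
  rw [natDegree_mul (left_ne_zero_of_mul hirr.ne_zero) (right_ne_zero_of_mul hirr.ne_zero)] at hdeg
  rw [hR.isUnit_iff_skewNatDegree_eq_zero ha, hR.isUnit_iff_skewNatDegree_eq_zero hb]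
  rcases hirr.isUnit_or_isUnit rfl with h | h <;> have := natDegree_eq_zero_of_isUnit h <;> omega

section Descent

variable (F : Type*) [Field F] [Algebra F K] {n : ℕ} (hσn : σ^[n] = id)

noncomputable def evalPowBase : F[X] →+* R := (hR.evalPow hσn).comp (mapRingHom (algebraMap F K))

theorem evalPowBase_eq_sum (p : F[X]) :
    hR.evalPowBase F hσn p = p.sum fun k a => ι (algebraMap F K a) * t ^ (n * k) := by
  change eval₂ ι (t ^ n) (p.map (algebraMap F K)) = _
  rw [eval₂_map, eval₂_eq_sum]
  simp only [pow_mul, RingHom.comp_apply]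

variable {F}

theorem commute_evalPowBase (hσF : ∀ a : F, σ (algebraMap F K a) = algebraMap F K a) (p : F[X])
    (x : R) : Commute (hR.evalPowBase F hσn p) x :=
  hR.commute_evalPow_of_map_eq hσn (by
    rw [coe_mapRingHom, map_map, (RingHom.ext hσF : σ.comp (algebraMap F K) = _)]) x

theorem skewNatDegree_evalPowBase (hn : 0 < n) {p : F[X]} (hp : p ≠ 0) :
    deg (hR.evalPowBase F hσn p) = n * p.natDegree := by
  rw [← natDegree_map (algebraMap F K)]
  exact hR.skewNatDegree_evalPow hσn hn (p.map_ne_zero hp)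

theorem evalPowBase_injective (hn : 0 < n) : Function.Injective (hR.evalPowBase F hσn) :=
  (hR.evalPow_injective hσn hn).comp (map_injective _ (algebraMap F K).injective)

theorem comap_evalPowBase_span_eq (hσF : ∀ a : F, σ (algebraMap F K a) = algebraMap F K a)
    (hn : 0 < n) {f : R} {h : F[X]} (hmonic : h.Monic)
    (hmem : hR.evalPowBase F hσn h ∈ Ideal.span {f})
    (hmin : ∀ c ∈ Subring.center R, c ≠ 0 → c ∈ Ideal.span {f} →
      deg (hR.evalPowBase F hσn h) ≤ deg c) :
    (Ideal.span {f}).comap (hR.evalPowBase F hσn) = Ideal.span {h} := by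
  refine Ideal.eq_span_singleton_of_monic_of_natDegree_le hmonic hmem fun p hp hp0 => ?_
  have hcentral : hR.evalPowBase F hσn p ∈ Subring.center R :=
    Subring.mem_center_iff.2 fun x => (hR.commute_evalPowBase hσn hσF p x).eq.symm
  have hle := hmin _ hcentral ((map_ne_zero_iff _ (hR.evalPowBase_injective hσn hn)).2 hp0) hp
  rw [hR.skewNatDegree_evalPowBase hσn hn hmonic.ne_zero,
    hR.skewNatDegree_evalPowBase hσn hn hp0] at hle
  exact Nat.le_of_mul_le_mul_left hle hn

end Descent

section Norm

variable {F : Type*} [Field F] [Algebra F K] {n : ℕ} (hσn : σ^[n] = id)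
  {ρ : R → Matrix (Fin n) (Fin n) K[X]}
  (hρ : ∀ g (i : Fin n), t ^ (i : ℕ) * g = ∑ j : Fin n, hR.evalPow hσn (ρ g i j) * t ^ (j : ℕ))
  {ν : R → F[X]} (hν : ∀ g, (ν g).map (algebraMap F K) = (ρ g).det)
include hσn hρ hν

theorem ν_mul (a b : R) : ν (a * b) = ν a * ν b :=
  map_injective _ (algebraMap F K).injective <| by
    rw [Polynomial.map_mul, hν, hν, hν, hR.ρ_mul hσn hρ, Matrix.det_mul]

theorem ν_ne_zero {g : R} (hg : g ≠ 0) : ν g ≠ 0 := fun h =>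
  hR.det_ρ_ne_zero hσn hρ hg (by rw [← hν, h, Polynomial.map_zero])

theorem natDegree_ν_le [NeZero n] {g : R} (hg : g ≠ 0) : (ν g).natDegree ≤ deg g := by
  rw [← natDegree_map (algebraMap F K), hν]
  exact hR.natDegree_det_ρ_le hσn hρ hg

theorem ν_mem_comap_span [NeZero n] (g : R) :
    ν g ∈ (Ideal.span {g}).comap (hR.evalPowBase F hσn) := by
  change hR.evalPow hσn ((ν g).map (algebraMap F K)) ∈ Ideal.span {g}
  rw [hν]
  exact hR.evalPow_det_ρ_mem_span hσn hρ g

theorem ν_eq_C_mul_and_irreducible_iff [NeZero n]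
    (hσF : ∀ a : F, σ (algebraMap F K a) = algebraMap F K a) {f : R} (hf : f ≠ 0) {h : F[X]}
    (hmonic : h.Monic) (hJ : (Ideal.span {f}).comap (hR.evalPowBase F hσn) = Ideal.span {h})
    (hdeg : h.natDegree = deg f) :
    ν f = C (ν f).leadingCoeff * h ∧ (Irreducible f ↔ Irreducible (ν f)) := by
  have hνf := eq_leadingCoeff_mul_of_monic_of_dvd_of_natDegree_le hmonic
    (Ideal.mem_span_singleton.1 (hJ ▸ hR.ν_mem_comap_span hσn hρ hν f))
    (hdeg ▸ hR.natDegree_ν_le hσn hρ hν hf)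
  have hlc : (ν f).leadingCoeff ≠ 0 := leadingCoeff_ne_zero.2 (hR.ν_ne_zero hσn hρ hν hf)
  refine ⟨hνf, fun hirr => ?_, hR.irreducible_of_irreducible_of_natDegree_eq ν
    (hR.ν_mul hσn hρ hν) (fun _ => hR.natDegree_ν_le hσn hρ hν) hf ?_⟩
  · have := hR.isDomain
    have := hR.isPrincipalIdealRing
    have hprime := Ideal.isPrime_comap_span_singleton_of_irreducible _
      (hR.commute_evalPowBase hσn hσF) hirr
    rw [hJ, Ideal.span_singleton_prime hmonic.ne_zero] at hprime
    rw [hνf]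
    exact (associated_unit_mul_left h _ (isUnit_C.2 hlc.isUnit)).symm.irreducible hprime.irreducible
  · rw [hνf, natDegree_C_mul hlc, hdeg]

end Norm

end IsSkewPolynomialRing

theorem norm_eq_scalar_mul_mclm_and_irreducibility_criterion_general
    (F K : Type) [Field F] [Field K] [Algebra F K] [IsGalois F K]
    (n : ℕ) (hn : 0 < n) (hdim : Module.finrank F K = n)
    (σ : K ≃ₐ[F] K) (hσgen : ∀ τ : K ≃ₐ[F] K, τ ∈ Subgroup.zpowers σ)
    (R : Type) [Ring R] (ι : K →+* R) (t : R)
    (hmul : ∀ a : K, t * ι a = ι (σ a) * t)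
    (coeff : R →+ (ℕ →₀ K))
    (hcoeff : ∀ (a : K) (i : ℕ), coeff (ι a * t ^ i) = Finsupp.single i a)
    (hrepr : ∀ x : R, (coeff x).sum (fun i a => ι a * t ^ i) = x)
    (ρ : R → Matrix (Fin n) (Fin n) (Polynomial K))
    (hρ : ∀ (g : R) (i : Fin n), t ^ (i : ℕ) * g =
      ∑ j : Fin n, ((ρ g i j).sum fun k a => ι a * t ^ (n * k)) * t ^ (j : ℕ))
    (N : R → Polynomial K) (hN : ∀ g : R, N g = (ρ g).det)
    (f : R) (m : ℕ) (hdeg : coeff f m ≠ 0 ∧ ∀ i : ℕ, m < i → coeff f i = 0)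
    -- ĥ ∈ F[x] monic with h(t) = ĥ(t^n) the minimal central left multiple of f:
    (hhat : Polynomial F) (hmonic : hhat.Monic)
    (hleft : ∃ g : R, (hhat.sum fun k a => ι (algebraMap F K a) * t ^ (n * k)) = g * f)
    (hminimal : ∀ c : R, c ∈ Subring.center R → c ≠ 0 → (∃ g : R, c = g * f) →
      (coeff (hhat.sum fun k a => ι (algebraMap F K a) * t ^ (n * k))).support.sup id ≤
        (coeff c).support.sup id)
    (hdeghat : hhat.natDegree = m) :
    (∃ a : K, a ≠ 0 ∧ N f = Polynomial.C a * hhat.map (algebraMap F K)) ∧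
    (∃ q : Polynomial F, q.map (algebraMap F K) = N f ∧ (Irreducible f ↔ Irreducible q)) := by
  have : FiniteDimensional F K := Module.finite_of_finrank_pos (hdim ▸ hn)
  have : NeZero n := ⟨hn.ne'⟩
  have hR : IsSkewPolynomialRing (σ : K →+* K) ι t coeff := ⟨hmul, hcoeff, hrepr⟩
  have hσn : (⇑(σ : K →+* K))^[n] = id := hdim ▸ σ.iterate_finrank_eq_id
  have hρ' : ∀ g (i : Fin n), t ^ (i : ℕ) * g = ∑ j, hR.evalPow hσn (ρ g i j) * t ^ (j : ℕ) := by
    simpa only [← hR.evalPow_eq_sum hσn] using hρ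
  choose ν hν using fun g =>
    (mem_lifts _).1 (mem_lifts_of_map_eq_self hσgen (hR.map_det_ρ hσn hρ' g))
  have hf : f ≠ 0 := fun h => hdeg.1 (by rw [h, map_zero, Finsupp.coe_zero, Pi.zero_apply])
  have hdegf : skewNatDegree coeff f = m :=
    le_antisymm (skewNatDegree_le_of_forall_lt hdeg.2) (le_skewNatDegree_of_coeff_ne_zero hdeg.1)
  rw [← hR.evalPowBase_eq_sum F hσn] at hleft hminimal
  have hJ := hR.comap_evalPowBase_span_eq hσn σ.commutes hn hmonic
    (Ideal.mem_span_singleton'.2 (hleft.imp fun _ => Eq.symm))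
    fun c hc hc0 hcf => hminimal c hc hc0 ((Ideal.mem_span_singleton'.1 hcf).imp fun _ => Eq.symm)
  obtain ⟨hνf, hirr⟩ := hR.ν_eq_C_mul_and_irreducible_iff hσn hρ' hν σ.commutes hf hmonic hJ
    (hdeghat.trans hdegf.symm)
  refine ⟨⟨algebraMap F K (ν f).leadingCoeff, ?_, ?_⟩, ν f, by rw [hν, hN], hirr⟩
  · exact (_root_.map_ne_zero _).2 (leadingCoeff_ne_zero.2 (hR.ν_ne_zero hσn hρ' hν hf))
  · conv_lhs => rw [hN, ← hν, hνf]
    rw [Polynomial.map_mul, map_C]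

/-- If `f ∈ R = K[t;σ]` has degree `m`, `gcrd(f,t)=1`, and its minimal central
left multiple `ĥ` has degree `m` in `x`, then `N(f) = a·ĥ(t^n)` for some
`a ∈ K^×`, and `f` is irreducible in `R` iff `N(f)` is irreducible in `F[x]`. -/
theorem norm_eq_scalar_mul_mclm_and_irreducibility_criterion
    (F K : Type) [Field F] [Field K] [Algebra F K] [IsGalois F K]
    (n : ℕ) (hn : 0 < n) (hdim : Module.finrank F K = n)
    (σ : K ≃ₐ[F] K) (hσgen : ∀ τ : K ≃ₐ[F] K, τ ∈ Subgroup.zpowers σ)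
    (R : Type) [Ring R] (ι : K →+* R) (t : R)
    (hmul : ∀ a : K, t * ι a = ι (σ a) * t)
    (coeff : R →+ (ℕ →₀ K))
    (hcoeff : ∀ (a : K) (i : ℕ), coeff (ι a * t ^ i) = Finsupp.single i a)
    (hrepr : ∀ x : R, (coeff x).sum (fun i a => ι a * t ^ i) = x)
    (ρ : R → Matrix (Fin n) (Fin n) (Polynomial K))
    (hρ : ∀ (g : R) (i : Fin n), t ^ (i : ℕ) * g =
      ∑ j : Fin n, ((ρ g i j).sum fun k a => ι a * t ^ (n * k)) * t ^ (j : ℕ))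
    (N : R → Polynomial K) (hN : ∀ g : R, N g = (ρ g).det)
    (f : R) (m : ℕ) (hdeg : coeff f m ≠ 0 ∧ ∀ i : ℕ, m < i → coeff f i = 0)
    (hgcrd : ∃ p q : R, p * f + q * t = 1)
    -- ĥ ∈ F[x] monic with h(t) = ĥ(t^n) the minimal central left multiple of f:
    (hhat : Polynomial F) (hmonic : hhat.Monic)
    (hleft : ∃ g : R, (hhat.sum fun k a => ι (algebraMap F K a) * t ^ (n * k)) = g * f)
    (hcentral : (hhat.sum fun k a => ι (algebraMap F K a) * t ^ (n * k)) ∈ Subring.center R)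
    (hminimal : ∀ c : R, c ∈ Subring.center R → c ≠ 0 → (∃ g : R, c = g * f) →
      (coeff (hhat.sum fun k a => ι (algebraMap F K a) * t ^ (n * k))).support.sup id ≤
        (coeff c).support.sup id)
    (hdeghat : hhat.natDegree = m) :
    (∃ a : K, a ≠ 0 ∧ N f = Polynomial.C a * hhat.map (algebraMap F K)) ∧
    (∃ q : Polynomial F, q.map (algebraMap F K) = N f ∧ (Irreducible f ↔ Irreducible q)) :=
  norm_eq_scalar_mul_mclm_and_irreducibility_criterion_general F K n hn hdim σ hσgen R ι t hmul
    coeff hcoeff hrepr ρ hρ N hN f m hdeg hhat hmonic hleft hminimal hdeghat
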